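/- arXiv:1906.10358 — 4 statements merged into one kernel-verified Lean document; each statement's English description precedes it below -/
import Mathlib

section
/- Let N ≥ 2. For j = 1, ..., N define O_j ⊆ SU(N) as the set of V whose eigenvalue labeling λ(V) satisfies the strict inequality at position j, i.e., λ_j(V) > λ_{j+1}(V) if 1 ≤ j ≤ N−1, and λ_N(V) > λ_1(V) − 1 if j = N. Then each O_j is an open subset of SU(N), and the union O_1 ∪ O_2 ∪ ... ∪ O_N equals SU(N). -/
/-!
The labeling is recovered from the eigenvalues by a counting formula. If `λ` is weakly
decreasing with all entries within distance `1` of each other, then `λ_k ≤ t` holds exactly when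
`∑ i, ⌊t - λ_i⌋ ≥ 1 - k`; when moreover `∑ i, λ_i = 0`, that sum equals
`N t - ∑ i, fract (t - λ_i)`, which only depends on the multiset of eigenvalues `e^{2πiλ_i}`.
So the labelings form a compact set on which `λ ↦ ∏ i, (X - e^{2πiλ_i})` is injective, and the
labeling is continuous because the characteristic polynomial of `V` is. The sets `O_j` are then
open, and they cover `SU(N)` since otherwise `λ_1 ≤ λ_2 ≤ ⋯ ≤ λ_N ≤ λ_1 - 1`.
-/

open Polynomial Finset Real

/-- The condition `λ_N ≥ λ_1 - 1` is stated as `λ_i ≤ λ_j + 1` for all `i, j`, which is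
equivalent for decreasing `λ`. -/
def IsLabeling {N : ℕ} (x : Fin N → ℝ) : Prop :=
  ∑ i, x i = 0 ∧ Antitone x ∧ ∀ i j, x i ≤ x j + 1

theorem Fin.monotone_of_le_succ {α : Type*} [Preorder α] {N : ℕ} {a : Fin N → α}
    (h : ∀ j (hj : j + 1 < N), a ⟨j, Nat.lt_of_succ_lt hj⟩ ≤ a ⟨j + 1, hj⟩) : Monotone a := by
  rintro ⟨i, hi⟩ ⟨k, hk⟩ hik
  rw [Fin.mk_le_mk] at hik
  induction k, hik using Nat.le_induction with
  | base => exact le_rfl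
  | succ k hik ih => exact (ih (by omega)).trans (h k hk)

theorem Finset.sum_eq_sum_of_map_eq_of_factorsThrough {ι α β M : Type*} [Fintype ι]
    [AddCommMonoid M] {g : α → β} {φ : α → M} (hφ : φ.FactorsThrough g) {f f' : ι → α}
    (h : univ.val.map (g ∘ f) = univ.val.map (g ∘ f')) :
    ∑ i, φ (f i) = ∑ i, φ (f' i) := by
  have hfactor : ∀ f : ι → α,
      ∑ i, φ (f i) = ((univ.val.map (g ∘ f)).map (g.extend φ 0)).sum := by
    intro f
    rw [Multiset.map_map, ← sum_eq_multiset_sum]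
    simp [hφ.extend_apply]
  rw [hfactor f, hfactor f', h]

theorem exists_int_eq_add_of_exp_eq {x y : ℝ}
    (h : Complex.exp (2 * π * Complex.I * x) = Complex.exp (2 * π * Complex.I * y)) :
    ∃ k : ℤ, x = y + k := by
  obtain ⟨k, hk⟩ := Complex.exp_eq_exp_iff_exists_int.mp h
  refine ⟨k, ?_⟩
  have h2πI : 2 * (π : ℂ) * Complex.I ≠ 0 := by simp [pi_ne_zero]
  have : (x : ℂ) = y + k := mul_left_cancel₀ h2πI (by rw [hk]; ring)
  exact_mod_cast this

theorem sum_fract_sub_eq_of_map_exp_eq {ι : Type*} [Fintype ι] {x y : ι → ℝ}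
    (h : univ.val.map (fun i => Complex.exp (2 * π * Complex.I * x i)) =
      univ.val.map (fun i => Complex.exp (2 * π * Complex.I * y i))) (t : ℝ) :
    ∑ i, Int.fract (t - x i) = ∑ i, Int.fract (t - y i) := by
  refine sum_eq_sum_of_map_eq_of_factorsThrough (φ := fun s => Int.fract (t - s))
    (g := fun s : ℝ => Complex.exp (2 * π * Complex.I * s)) (fun a b hab => ?_) h
  obtain ⟨k, rfl⟩ := exists_int_eq_add_of_exp_eq hab
  simp only [← sub_sub, Int.fract_sub_intCast]

theorem sum_floor_sub_eq {ι : Type*} [Fintype ι] {x : ι → ℝ} (hx : ∑ i, x i = 0) (t : ℝ) :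
    ((∑ i, ⌊t - x i⌋ : ℤ) : ℝ) = Fintype.card ι * t - ∑ i, Int.fract (t - x i) := by
  simp only [← Int.self_sub_floor, Int.cast_sum, sum_sub_distrib, hx, sum_const, card_univ,
    nsmul_eq_mul]
  ring

theorem le_iff_neg_le_sum_floor {N : ℕ} {x : Fin N → ℝ} (hx : Antitone x)
    (hwidth : ∀ i j, x i ≤ x j + 1) (k : Fin N) (t : ℝ) :
    x k ≤ t ↔ -(k : ℤ) ≤ ∑ i, ⌊t - x i⌋ := by
  constructor
  · intro hkt
    calc -(k : ℤ) = ∑ i, -(if i ∈ Iio k then 1 else 0) := by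
          simp only [sum_neg_distrib, sum_ite_mem, univ_inter, sum_const, Fin.card_Iio,
            nsmul_eq_mul, mul_one]
      _ ≤ ∑ i, ⌊t - x i⌋ := by
        refine sum_le_sum fun i _ => ?_
        split_ifs with hik
        · have := hwidth i k
          exact Int.le_floor.mpr (by push_cast; linarith)
        · have := hx (not_lt.mp (mem_Iio.not.mp hik))
          exact Int.le_floor.mpr (by push_cast; linarith)
  · intro hsum
    by_contra! htk
    have : ∑ i, ⌊t - x i⌋ ≤ -((k : ℤ) + 1) :=
      calc ∑ i, ⌊t - x i⌋ ≤ ∑ i, -(if i ∈ Iic k then 1 else 0) := by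
            refine sum_le_sum fun i _ => ?_
            split_ifs with hik
            · have := hx (mem_Iic.mp hik)
              exact Int.floor_le_neg_one_iff.mpr (by linarith)
            · have := hwidth k i
              have : ⌊t - x i⌋ < 1 := Int.floor_lt.mpr (by push_cast; linarith)
              omega
        _ = -((k : ℤ) + 1) := by
          simp only [sum_neg_distrib, sum_ite_mem, univ_inter, sum_const, Fin.card_Iic,
            nsmul_eq_mul, mul_one]
          push_cast
          ring
    omega

namespace IsLabeling

variable {N : ℕ} {x y : Fin N → ℝ}

theorem eq_of_map_exp_eq (hx : IsLabeling x) (hy : IsLabeling y)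
    (h : univ.val.map (fun i => Complex.exp (2 * π * Complex.I * x i)) =
      univ.val.map (fun i => Complex.exp (2 * π * Complex.I * y i))) : x = y := by
  have hfloor : ∀ t, ∑ i, ⌊t - x i⌋ = ∑ i, ⌊t - y i⌋ := fun t => by
    have := sum_floor_sub_eq hx.1 t
    rw [sum_fract_sub_eq_of_map_exp_eq h t, ← sum_floor_sub_eq hy.1 t] at this
    exact_mod_cast this
  funext k
  have hle : ∀ t, x k ≤ t ↔ y k ≤ t := fun t => by
    rw [le_iff_neg_le_sum_floor hx.2.1 hx.2.2, le_iff_neg_le_sum_floor hy.2.1 hy.2.2, hfloor]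
  exact le_antisymm ((hle _).mpr le_rfl) ((hle _).mp le_rfl)

theorem mem_Icc (hx : IsLabeling x) (i : Fin N) : x i ∈ Set.Icc (-1) 1 := by
  obtain ⟨hsum, -, hwidth⟩ := hx
  have hN : (0 : ℝ) < N := by exact_mod_cast i.pos
  have hupper : ∑ _j : Fin N, x i ≤ ∑ j, (x j + 1) := sum_le_sum fun j _ => hwidth i j
  have hlower : ∑ j, x j ≤ ∑ _j : Fin N, (x i + 1) := sum_le_sum fun j _ => hwidth j i
  simp only [sum_add_distrib, hsum, sum_const, card_univ, Fintype.card_fin, nsmul_eq_mul]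
    at hupper hlower
  constructor <;> nlinarith

end IsLabeling

theorem isCompact_setOf_isLabeling (N : ℕ) : IsCompact {x : Fin N → ℝ | IsLabeling x} := by
  refine (isCompact_Icc (a := fun _ => -1) (b := fun _ => 1)).of_isClosed_subset ?_
    fun x hx => ⟨fun i => (hx.mem_Icc i).1, fun i => (hx.mem_Icc i).2⟩
  simp only [IsLabeling, Set.ofPred_and, Set.ofPred_forall]
  exact (isClosed_eq (continuous_finsetSum _ fun i _ => continuous_apply i) continuous_const).inter
    (isClosed_antitone.inter (isClosed_iInter fun i => isClosed_iInter fun j =>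
      isClosed_le (continuous_apply i) ((continuous_apply j).add continuous_const)))

theorem continuous_of_continuous_comp_of_injOn {S Y Z : Type*} [TopologicalSpace S]
    [TopologicalSpace Y] [TopologicalSpace Z] [T2Space Z] {K : Set Y} (hK : IsCompact K)
    {Φ : Y → Z} (hΦ : ContinuousOn Φ K) (hinj : K.InjOn Φ) {f : S → Y} (hfK : ∀ s, f s ∈ K)
    (hf : Continuous (Φ ∘ f)) : Continuous f := by
  have : CompactSpace K := isCompact_iff_compactSpace.mp hK
  have hemb := (hΦ.domRestrict.isClosedEmbedding hinj.injective).isEmbedding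
  exact continuous_subtype_val.comp (hemb.continuous_iff.mpr hf : Continuous (K.codRestrict f hfK))

theorem Polynomial.roots_finset_prod_X_sub_C {ι R : Type*} [CommRing R] [IsDomain R]
    (s : Finset ι) (a : ι → R) : (∏ i ∈ s, (X - C (a i))).roots = s.val.map a := by
  rw [prod_eq_multiset_prod, ← Function.comp_def (fun r => X - C r) a, ← Multiset.map_map,
    roots_multiset_prod_X_sub_C]

theorem continuous_of_charpoly_eq_prod {S : Type*} [TopologicalSpace S] {N : ℕ}
    {M : S → Matrix (Fin N) (Fin N) ℂ} (hM : Continuous M) {lab : S → Fin N → ℝ}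
    (hlab : ∀ s, IsLabeling (lab s))
    (hchar : ∀ s, (M s).charpoly = ∏ i, (X - C (Complex.exp (2 * π * Complex.I * lab s i)))) :
    Continuous lab := by
  let Φ : (Fin N → ℝ) → ℂ → ℂ := fun x z => ∏ i, (z - Complex.exp (2 * π * Complex.I * x i))
  have hΦ : Continuous Φ := continuous_pi fun z => continuous_finsetProd _ fun i _ =>
    continuous_const.sub (Complex.continuous_exp.comp
      (continuous_const.mul (Complex.continuous_ofReal.comp (continuous_apply i))))
  have hinj : {x | IsLabeling x}.InjOn Φ := fun x hx y hy hxy => by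
    have hpoly : ∏ i, (X - C (Complex.exp (2 * π * Complex.I * x i))) =
        ∏ i, (X - C (Complex.exp (2 * π * Complex.I * y i))) :=
      Polynomial.funext fun z => by simpa [eval_prod] using congrFun hxy z
    have := congrArg roots hpoly
    rw [roots_finset_prod_X_sub_C, roots_finset_prod_X_sub_C] at this
    exact hx.eq_of_map_exp_eq hy this
  have hcomp : Φ ∘ lab = fun s z => (M s).charpoly.eval z := by
    funext s z
    simp [Φ, hchar, eval_prod]
  refine continuous_of_continuous_comp_of_injOn (isCompact_setOf_isLabeling N) hΦ.continuousOn
    hinj hlab ?_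
  rw [hcomp]
  simp only [Matrix.eval_charpoly]
  exact continuous_pi fun z => (continuous_const.sub hM).matrix_det

/-- Let `N ≥ 2` and let `lab` be the eigenvalue labeling of `SU(N)`: for each
`V`, `lab V` sums to zero, is weakly decreasing, satisfies `lab V (N-1) ≥ lab V 0 − 1`, and the
characteristic polynomial of `V` is `∏ i, (X − e^{2πi · lab V i})`. For `j = 1, …, N−1` let
`O_j` be the set of `V` with `λ_j(V) > λ_{j+1}(V)`, and let `O_N` be the set of `V` with
`λ_N(V) > λ_1(V) − 1`. Then each `O_j` is open and `O_1 ∪ ⋯ ∪ O_N = SU(N)`. -/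
theorem open_cover_O (N : ℕ) (hN : 2 ≤ N)
    (lab : Matrix.specialUnitaryGroup (Fin N) ℂ → Fin N → ℝ)
    (hlab : ∀ V : Matrix.specialUnitaryGroup (Fin N) ℂ,
      (∑ i, lab V i = 0) ∧
      (∀ i j : Fin N, i ≤ j → lab V j ≤ lab V i) ∧
      (lab V ⟨0, by omega⟩ - 1 ≤ lab V ⟨N - 1, by omega⟩) ∧
      Matrix.charpoly (V : Matrix (Fin N) (Fin N) ℂ) =
        ∏ i, (Polynomial.X -
          Polynomial.C (Complex.exp (2 * Real.pi * Complex.I * (lab V i))))) :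
    (∀ j : ℕ, (hj : j + 1 < N) →
      IsOpen {V : Matrix.specialUnitaryGroup (Fin N) ℂ |
        lab V ⟨j + 1, hj⟩ < lab V ⟨j, by omega⟩}) ∧
    IsOpen {V : Matrix.specialUnitaryGroup (Fin N) ℂ |
      lab V ⟨0, by omega⟩ - 1 < lab V ⟨N - 1, by omega⟩} ∧
    ((⋃ (j : ℕ) (hj : j + 1 < N), {V : Matrix.specialUnitaryGroup (Fin N) ℂ |
        lab V ⟨j + 1, hj⟩ < lab V ⟨j, by omega⟩}) ∪
      {V : Matrix.specialUnitaryGroup (Fin N) ℂ |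
        lab V ⟨0, by omega⟩ - 1 < lab V ⟨N - 1, by omega⟩} = Set.univ) := by
  have hlabeling : ∀ V, IsLabeling (lab V) := fun V => by
    obtain ⟨hsum, hanti, hwrap, -⟩ := hlab V
    refine ⟨hsum, fun i j => hanti i j, fun i j => ?_⟩
    calc lab V i ≤ lab V ⟨0, by omega⟩ := hanti _ _ (Fin.mk_le_mk.mpr (Nat.zero_le i))
      _ ≤ lab V ⟨N - 1, by omega⟩ + 1 := by linarith
      _ ≤ lab V j + 1 := by gcongr; exact hanti _ _ (Fin.mk_le_mk.mpr (by omega))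
  have hcont := continuous_of_charpoly_eq_prod continuous_subtype_val hlabeling
    fun V => (hlab V).2.2.2
  have hcoord : ∀ i, Continuous fun V => lab V i := fun i => (continuous_apply i).comp hcont
  refine ⟨fun j hj => isOpen_lt (hcoord _) (hcoord _),
    isOpen_lt ((hcoord _).sub continuous_const) (hcoord _), Set.eq_univ_of_forall fun V => ?_⟩
  by_contra hV
  simp only [Set.mem_union, Set.mem_iUnion, Set.mem_ofPred_eq, not_or, not_exists, not_lt] at hV
  obtain ⟨hstep, hwrap⟩ := hV
  have : lab V ⟨0, by omega⟩ ≤ lab V ⟨N - 1, by omega⟩ :=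
    Fin.monotone_of_le_succ hstep (Fin.mk_le_mk.mpr (Nat.zero_le (N - 1)))
  linarith
end

section
/- Let X be a topological space, Y ⊆ X a subspace, and N ≥ 2. Let U : X → U(N) be a continuous map with U|_Y ≡ 1 (the constant identity matrix on Y). Then U is homotopic rel Y, as a map into U(N), to a continuous map V : X → U(N) taking values in SU(N) with V|_Y ≡ 1, if and only if the map det∘U : X → U(1) is homotopic rel Y to the constant map 1. -/
/-
A unitary `U` with `det ∘ U ≃ 1` rel `Y` via `h` is corrected by `D(x,s)`, the diagonal matrix
with first entry `conj (det U x) * h(x,s)` and all other entries `1`: `D(·,0) = 1`, `D ≡ 1` on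
`Y`, and `det (U x * D(x,1)) = 1`, so `s ↦ U * D(·,s)` is the required homotopy. Conversely,
`det` carries a homotopy in `U(N)` to one in `U(1)`.
-/

/-- `f` and `g` are homotopic rel `Y` through maps with values in `G ⊆ M`: there is a
continuous `H : X × [0,1] → M` with `H(·,0) = f`, `H(·,1) = g`, `H(y,s) = f y` for `y ∈ Y`,
and `H(x,s) ∈ G` throughout. -/
def HomotopicRelWithin {X M : Type*} [TopologicalSpace X] [TopologicalSpace M]
    (G : Set M) (f g : X → M) (Y : Set X) : Prop :=
  ∃ H : X × unitInterval → M, Continuous H ∧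
    (∀ x, H (x, 0) = f x) ∧ (∀ x, H (x, 1) = g x) ∧
    (∀ y ∈ Y, ∀ s, H (y, s) = f y) ∧ (∀ x s, H (x, s) ∈ G)

section HomotopicRelWithin

variable {X M : Type*} [TopologicalSpace X] [TopologicalSpace M] {Y : Set X}

theorem HomotopicRelWithin.comp {M' : Type*} [TopologicalSpace M'] {G : Set M} {G' : Set M'}
    {f g : X → M} (hfg : HomotopicRelWithin G f g Y) {φ : M → M'} (hφ : Continuous φ)
    (hG : Set.MapsTo φ G G') : HomotopicRelWithin G' (φ ∘ f) (φ ∘ g) Y := by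
  obtain ⟨H, hH, h0, h1, hY, hG'⟩ := hfg
  exact ⟨φ ∘ H, hφ.comp hH, fun x => by simp [h0], fun x => by simp [h1],
    fun y hy s => by simp [hY y hy s], fun x s => hG (hG' x s)⟩

theorem homotopicRelWithin_mul_right [Monoid M] [ContinuousMul M] {S : Submonoid M}
    {U : X → M} (hU : Continuous U) (hUS : ∀ x, U x ∈ S) {D : X × unitInterval → M}
    (hD : Continuous D) (hD0 : ∀ x, D (x, 0) = 1) (hDY : ∀ y ∈ Y, ∀ s, D (y, s) = 1)
    (hDS : ∀ p, D p ∈ S) : HomotopicRelWithin (S : Set M) U (fun x => U x * D (x, 1)) Y :=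
  ⟨fun p => U p.1 * D p, (hU.comp continuous_fst).mul hD, fun x => by simp [hD0],
    fun x => rfl, fun y hy s => by simp [hDY y hy s], fun x s => S.mul_mem (hUS x) (hDS _)⟩

end HomotopicRelWithin

open ComplexConjugate

lemma Complex.conj_mul_self_of_norm_eq_one {z : ℂ} (hz : ‖z‖ = 1) : conj z * z = 1 := by
  simp [Complex.conj_mul', hz]

namespace Matrix

variable {n : Type*} [DecidableEq n]

lemma norm_det_of_mem_unitaryGroup [Fintype n] {A : Matrix n n ℂ} (hA : A ∈ unitaryGroup n ℂ) :
    ‖A.det‖ = 1 :=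
  CStarRing.norm_of_mem_unitary (det_of_mem_unitary hA)

def diagonalUpdateOne (i : n) (z : ℂ) : Matrix n n ℂ :=
  diagonal (Function.update 1 i z)

lemma continuous_diagonalUpdateOne (i : n) : Continuous (diagonalUpdateOne i) :=
  continuous_id.matrix_diagonal.comp (continuous_const.update i continuous_id)

@[simp]
lemma det_diagonalUpdateOne [Fintype n] (i : n) (z : ℂ) : (diagonalUpdateOne i z).det = z := by
  simp [diagonalUpdateOne, Finset.prod_update_of_mem (Finset.mem_univ i)]

@[simp]
lemma diagonalUpdateOne_one (i : n) : diagonalUpdateOne i 1 = 1 := by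
  simp [diagonalUpdateOne]

lemma diagonalUpdateOne_mem_unitaryGroup [Fintype n] (i : n) {z : ℂ} (hz : ‖z‖ = 1) :
    diagonalUpdateOne i z ∈ unitaryGroup n ℂ := by
  rw [mem_unitaryGroup_iff', star_eq_conjTranspose, diagonalUpdateOne, diagonal_conjTranspose,
    diagonal_mul_diagonal, ← diagonal_one]
  congr 1
  funext j
  rcases eq_or_ne j i with rfl | hj <;> simp [*, Complex.conj_mul_self_of_norm_eq_one]

end Matrix

open Matrix in
/-- Let `X` be a topological space, `Y ⊆ X`, `N ≥ 2`, and let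
`U : X → U(N)` be continuous with `U ≡ 1` on `Y`. Then `U` is homotopic rel `Y`, as a map
into `U(N)`, to a continuous `SU(N)`-valued map `V` with `V ≡ 1` on `Y`, if and only if
`det ∘ U : X → U(1)` is homotopic rel `Y` to the constant map `1`. -/
theorem homotopic_to_specialUnitary_iff_det (N : ℕ) (hN : 2 ≤ N)
    (X : Type*) [TopologicalSpace X] (Y : Set X)
    (U : X → Matrix (Fin N) (Fin N) ℂ) (hU : Continuous U)
    (hUmem : ∀ x, U x ∈ Matrix.unitaryGroup (Fin N) ℂ)
    (hUY : ∀ y ∈ Y, U y = 1) :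
    (∃ V : X → Matrix (Fin N) (Fin N) ℂ, Continuous V ∧
      (∀ x, V x ∈ Matrix.specialUnitaryGroup (Fin N) ℂ) ∧ (∀ y ∈ Y, V y = 1) ∧
      HomotopicRelWithin (Matrix.unitaryGroup (Fin N) ℂ : Set _) U V Y) ↔
    HomotopicRelWithin {z : ℂ | ‖z‖ = 1} (fun x => (U x).det) (fun _ => 1) Y := by
  have i : Fin N := ⟨0, by omega⟩
  constructor
  · rintro ⟨V, -, hV, -, hUV⟩
    have hdetV : (fun x => (V x).det) = fun _ => 1 :=
      funext fun x => (mem_specialUnitaryGroup_iff.mp (hV x)).2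
    exact hdetV ▸ hUV.comp continuous_id.matrix_det fun A => norm_det_of_mem_unitaryGroup
  · rintro ⟨h, hh, h0, h1, hY, hcircle⟩
    have hdetU x : conj (U x).det * (U x).det = 1 :=
      Complex.conj_mul_self_of_norm_eq_one (norm_det_of_mem_unitaryGroup (hUmem x))
    set D := fun p : X × unitInterval => diagonalUpdateOne i (conj (U p.1).det * h p)
    have hD : Continuous D :=
      (continuous_diagonalUpdateOne i).comp
        ((Complex.continuous_conj.comp (hU.comp continuous_fst).matrix_det).mul hh)
    have hD0 x : D (x, 0) = 1 := by simp only [D, h0, hdetU, diagonalUpdateOne_one]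
    have hDY y (hy : y ∈ Y) s : D (y, s) = 1 := by
      simp only [D, hY y hy s, hdetU, diagonalUpdateOne_one]
    have hDmem p : D p ∈ unitaryGroup (Fin N) ℂ := by
      refine diagonalUpdateOne_mem_unitaryGroup i ?_
      rw [norm_mul, Complex.norm_conj, norm_det_of_mem_unitaryGroup (hUmem _), hcircle, one_mul]
    refine ⟨fun x => U x * D (x, 1), hU.mul (hD.comp (by fun_prop)), fun x => ?_,
      fun y hy => by simp [hDY y hy, hUY y hy],
      homotopicRelWithin_mul_right hU hUmem hD hD0 hDY hDmem⟩
    refine mem_specialUnitaryGroup_iff.mpr ⟨mul_mem (hUmem x) (hDmem _), ?_⟩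
    simp only [det_mul, D, det_diagonalUpdateOne, h1, mul_one, mul_comm (U x).det, hdetU]
end

section
/- Let σ_1 = [[0,1],[1,0]] and σ_2 = [[0,−i],[i,0]] be the Pauli matrices, and for real k_1, k_2 define the 2×2 Hermitian matrices H_1 = −2π σ_1, H_2 = −2π(cos(k_1−k_2) σ_1 + sin(k_1−k_2) σ_2), H_3 = −2π(cos(k_1) σ_1 + sin(k_1) σ_2), H_4 = −2π(cos(k_2) σ_1 + sin(k_2) σ_2). Then for all k_1, k_2 ∈ ℝ the product of matrix exponentials exp(−(i/4)H_4) · exp(−(i/4)H_3) · exp(−(i/4)H_2) · exp(−(i/4)H_1) equals the 2×2 identity matrix. (Equivalently, the Floquet propagator of the Rudner model at resonance J = 2π satisfies U(k_1,k_2,1) = 1 for all quasi-momenta.) -/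
/-!
Each quarter-period Hamiltonian is `-2π A_θ` with `A_θ = cos θ σ₁ + sin θ σ₂` an involution, so
its propagator is `exp (iπ/2 A_θ) = i A_θ`. A product `A_α A_β` is the diagonal phase
`diag (e^{i(β-α)}, e^{-i(β-α)})`, and in `A_{k₂} A_{k₁} A_{k₁-k₂} A_0` the two phases cancel
because `k₂ + (k₁ - k₂) = k₁ + 0`; the four factors of `i` multiply to `1`.
-/

/-- The Pauli matrix `σ₁`. -/
noncomputable def pauli1 : Matrix (Fin 2) (Fin 2) ℂ := !![0, 1; 1, 0]

/-- The Pauli matrix `σ₂`. -/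
noncomputable def pauli2 : Matrix (Fin 2) (Fin 2) ℂ := !![0, -Complex.I; Complex.I, 0]

/-- `H₁ = −2π σ₁`. -/
noncomputable def rudnerH1 (_k1 _k2 : ℝ) : Matrix (Fin 2) (Fin 2) ℂ :=
  (-(2 * (Real.pi : ℂ))) • pauli1

/-- `H₂ = −2π (cos(k₁−k₂) σ₁ + sin(k₁−k₂) σ₂)`. -/
noncomputable def rudnerH2 (k1 k2 : ℝ) : Matrix (Fin 2) (Fin 2) ℂ :=
  (-(2 * (Real.pi : ℂ))) •
    (((Real.cos (k1 - k2) : ℂ)) • pauli1 + ((Real.sin (k1 - k2) : ℂ)) • pauli2)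

/-- `H₃ = −2π (cos(k₁) σ₁ + sin(k₁) σ₂)`. -/
noncomputable def rudnerH3 (k1 _k2 : ℝ) : Matrix (Fin 2) (Fin 2) ℂ :=
  (-(2 * (Real.pi : ℂ))) •
    (((Real.cos k1 : ℂ)) • pauli1 + ((Real.sin k1 : ℂ)) • pauli2)

/-- `H₄ = −2π (cos(k₂) σ₁ + sin(k₂) σ₂)`. -/
noncomputable def rudnerH4 (_k1 k2 : ℝ) : Matrix (Fin 2) (Fin 2) ℂ :=
  (-(2 * (Real.pi : ℂ))) •
    (((Real.cos k2 : ℂ)) • pauli1 + ((Real.sin k2 : ℂ)) • pauli2)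

open Complex
open scoped Real

section InvolutionExp

variable {𝔸 : Type*} [Ring 𝔸] [Algebra ℂ 𝔸] [TopologicalSpace 𝔸] [IsTopologicalRing 𝔸]
  [ContinuousSMul ℂ 𝔸] [T2Space 𝔸]

theorem exp_smul_of_mul_self_eq_one {a : 𝔸} (ha : a * a = 1) (z : ℂ) :
    NormedSpace.exp (z • a) = cosh z • 1 + sinh z • a := by
  have hpow (n : ℕ) : a ^ (2 * n) = 1 := by rw [pow_mul, sq, ha, one_pow]
  rw [NormedSpace.exp_eq_tsum ℂ]
  refine HasSum.tsum_eq (HasSum.even_add_odd ?_ ?_)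
  · convert (hasSum_cosh z).smul_const (1 : 𝔸) using 2 with n
    rw [smul_pow, hpow, smul_smul, div_eq_inv_mul]
  · convert (hasSum_sinh z).smul_const a using 2 with n
    rw [smul_pow, pow_succ a, hpow, one_mul, smul_smul, div_eq_inv_mul]

theorem exp_pi_div_two_mul_I_smul_of_mul_self_eq_one {a : 𝔸} (ha : a * a = 1) :
    NormedSpace.exp ((π / 2 * I) • a) = I • a := by
  rw [exp_smul_of_mul_self_eq_one ha, cosh_mul_I, sinh_mul_I, ← ofReal_ofNat, ← ofReal_div,
    ← ofReal_cos, ← ofReal_sin, Real.cos_pi_div_two, Real.sin_pi_div_two]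
  simp

end InvolutionExp

noncomputable def pauliInPlane (θ : ℝ) : Matrix (Fin 2) (Fin 2) ℂ :=
  (Real.cos θ : ℂ) • pauli1 + (Real.sin θ : ℂ) • pauli2

theorem pauliInPlane_eq (θ : ℝ) :
    pauliInPlane θ = !![0, cexp (-θ * I); cexp (θ * I), 0] := by
  rw [exp_mul_I, exp_mul_I, cos_neg, sin_neg]
  ext i j
  fin_cases i <;> fin_cases j <;> simp [pauliInPlane, pauli1, pauli2, ofReal_cos, ofReal_sin]

theorem pauliInPlane_mul_pauliInPlane (α β : ℝ) :
    pauliInPlane α * pauliInPlane β = !![cexp ((β - α) * I), 0; 0, cexp ((α - β) * I)] := by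
  rw [pauliInPlane_eq, pauliInPlane_eq, Matrix.mul_fin_two]
  simp only [mul_zero, zero_mul, add_zero, zero_add, ← Complex.exp_add]
  ring_nf

theorem pauliInPlane_mul_self (θ : ℝ) : pauliInPlane θ * pauliInPlane θ = 1 := by
  simp [pauliInPlane_mul_pauliInPlane, Matrix.one_fin_two]

theorem exp_neg_I_div_four_smul_neg_two_pi_smul (θ : ℝ) :
    NormedSpace.exp ((-(I / 4)) • ((-(2 * (π : ℂ))) • pauliInPlane θ)) = I • pauliInPlane θ := by
  rw [smul_smul, show -(I / 4) * -(2 * (π : ℂ)) = π / 2 * I by ring]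
  exact exp_pi_div_two_mul_I_smul_of_mul_self_eq_one (pauliInPlane_mul_self θ)

theorem pauliInPlane_mul_mul_mul_eq_one {a b c d : ℝ} (h : a + c = b + d) :
    pauliInPlane a * pauliInPlane b * pauliInPlane c * pauliInPlane d = 1 := by
  have h' : (a : ℂ) + c = b + d := by exact_mod_cast h
  rw [mul_assoc, pauliInPlane_mul_pauliInPlane, pauliInPlane_mul_pauliInPlane, Matrix.mul_fin_two,
    Matrix.one_fin_two]
  simp only [← Complex.exp_add, mul_zero, zero_mul, add_zero, zero_add]
  rw [show ((b : ℂ) - a) * I + (d - c) * I = 0 by linear_combination (-I) * h',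
    show ((a : ℂ) - b) * I + (c - d) * I = 0 by linear_combination I * h', Complex.exp_zero]

/-- The Floquet propagator of the Rudner model at resonance `J = 2π`
returns to the identity after one period:
`exp(−(i/4)H₄) · exp(−(i/4)H₃) · exp(−(i/4)H₂) · exp(−(i/4)H₁) = 1` for all `k₁, k₂ ∈ ℝ`. -/
theorem rudner_propagator_period_one (k1 k2 : ℝ) :
    NormedSpace.exp ((-(Complex.I / 4)) • rudnerH4 k1 k2) *
      NormedSpace.exp ((-(Complex.I / 4)) • rudnerH3 k1 k2) *
      NormedSpace.exp ((-(Complex.I / 4)) • rudnerH2 k1 k2) *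
      NormedSpace.exp ((-(Complex.I / 4)) • rudnerH1 k1 k2) =
    (1 : Matrix (Fin 2) (Fin 2) ℂ) := by
  have hH1 : rudnerH1 k1 k2 = (-(2 * (π : ℂ))) • pauliInPlane 0 := by
    simp [rudnerH1, pauliInPlane]
  rw [hH1, rudnerH2, rudnerH3, rudnerH4, ← pauliInPlane, ← pauliInPlane, ← pauliInPlane]
  simp only [exp_neg_I_div_four_smul_neg_two_pi_smul, smul_mul_smul]
  rw [pauliInPlane_mul_mul_mul_eq_one (by ring)]
  norm_num [I_mul_I]
end

section
/- Let T ⊂ SU(2) be the subgroup of diagonal matrices. The map SU(2) × T → SU(2), (g, h) ↦ g h g^{-1}, descends to a well-defined continuous map p : (SU(2)/T) × T → SU(2), where SU(2)/T carries the quotient topology. The restriction of p to the preimage of SU(2) \ {1, −1} is a double covering of SU(2) \ {1, −1}: it is a covering map onto SU(2) \ {1, −1} and every fiber over a point of SU(2) \ {1, −1} has exactly two elements. -/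
/-! Every `V ∈ SU(2)` is conjugate to a diagonal matrix, `V = g · diag(μ, μ̄) · g⁻¹`. When
`V ≠ ±1` the eigenvalue `μ` is not real, so the centralizer of `diag(μ, μ̄)` is `T`, and the pair
`{μ, μ̄}` is determined by the trace of `V`. Hence the fiber of `p` over `V` consists of exactly
the two points `(gT, diag(μ, μ̄))` and `(gwT, diag(μ̄, μ))`, `w` the Weyl element, told apart by
the sign of `Im μ`. As `(SU(2)/T) × T` is compact, `p` is a closed map, so the continuous bijection
`z ↦ (p z, sign of Im μ)` from `p⁻¹(SU(2) \ {±1})` onto `(SU(2) \ {±1}) × Bool` is a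
homeomorphism: a trivialization of `p`. -/

/-- The relation on `SU(2)` whose quotient is the left coset space `SU(2)/T`, where
`T ⊂ SU(2)` is the subgroup of diagonal matrices: `x ∼ y` iff `y = x·h` for some
diagonal `h ∈ SU(2)`. -/
def diagCosetRel2 (x y : Matrix.specialUnitaryGroup (Fin 2) ℂ) : Prop :=
  ∃ h : Matrix.specialUnitaryGroup (Fin 2) ℂ,
    (h : Matrix (Fin 2) (Fin 2) ℂ).IsDiag ∧ y = x * h

/-- The subgroup `T ⊂ SU(2)` of diagonal matrices, as a subspace. -/
def diagTorus2 : Type :=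
  {h : Matrix.specialUnitaryGroup (Fin 2) ℂ // (h : Matrix (Fin 2) (Fin 2) ℂ).IsDiag}

instance : TopologicalSpace diagTorus2 :=
  inferInstanceAs (TopologicalSpace
    {h : Matrix.specialUnitaryGroup (Fin 2) ℂ // (h : Matrix (Fin 2) (Fin 2) ℂ).IsDiag})

open Matrix ComplexConjugate

theorem IsClosedMap.isEvenlyCovered_of_sheet {E X I : Type*} [TopologicalSpace E]
    [TopologicalSpace X] [TopologicalSpace I] [DiscreteTopology I] [Finite I]
    {f : E → X} {s : Set X} (hf : Continuous f) (hfc : IsClosedMap f) (hs : IsOpen s)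
    (sheet : E → I) (hsheet : ContinuousOn sheet (f ⁻¹' s))
    (hinj : ∀ z ∈ f ⁻¹' s, ∀ w, f z = f w → sheet z = sheet w → z = w)
    (hsurj : ∀ x ∈ s, ∀ i, ∃ z, f z = x ∧ sheet z = i) {x : X} (hx : x ∈ s) :
    IsEvenlyCovered f x I := by
  have hsheet' := continuousOn_iff_continuous_domRestrict.mp hsheet
  let g : f ⁻¹' s → s × I := fun z => (s.restrictPreimage f z, sheet z)
  have hg : Function.Bijective g := by
    refine ⟨fun z w hzw => Subtype.ext (hinj z z.2 w ?_ ?_), fun ⟨y, i⟩ => ?_⟩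
    · exact congrArg Subtype.val (congrArg Prod.fst hzw)
    · exact congrArg Prod.snd hzw
    · obtain ⟨z, hzy, rfl⟩ := hsurj y y.2 i
      exact ⟨⟨z, by rw [Set.mem_preimage, hzy]; exact y.2⟩, Prod.ext (Subtype.ext hzy) rfl⟩
  have hg_closed : IsClosedMap g := by
    intro C hC
    have hsheets : g '' C =
        ⋃ i, (s.restrictPreimage f '' (C ∩ (f ⁻¹' s).domRestrict sheet ⁻¹' {i})) ×ˢ {i} := by
      ext ⟨y, i⟩
      simp only [Set.mem_image, Set.mem_iUnion, Set.mem_prod, Set.mem_inter_iff,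
        Set.mem_preimage, Set.mem_singleton_iff, Prod.mk.injEq, g]
      aesop
    rw [hsheets]
    exact isClosed_iUnion_of_finite fun i => ((hfc.restrictPreimage s) _
      (hC.inter (isClosed_discrete {i} |>.preimage hsheet'))).prod (isClosed_discrete _)
  exact ⟨inferInstance, s, hx, hs, hs.preimage hf,
    (Equiv.ofBijective g hg).toHomeomorphOfContinuousClosed
      ((hf.restrictPreimage).prodMk hsheet') hg_closed, fun _ => rfl⟩

theorem continuousAt_decide_pos {X : Type*} [TopologicalSpace X] {φ : X → ℝ} {x : X}
    (hφ : ContinuousAt φ x) (hx : φ x ≠ 0) : ContinuousAt (fun y => decide (0 < φ y)) x := by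
  have hcomp : (fun y => decide (0 < φ y)) =
      (fun s : SignType => decide (s = 1)) ∘ SignType.sign ∘ φ := by
    ext y; simp [sign_eq_one_iff]
  rw [hcomp]
  exact continuous_of_discreteTopology.continuousAt.comp
    ((continuousAt_sign_of_ne_zero hx).comp hφ)

theorem Complex.eq_of_re_eq_of_normSq_eq {z w : ℂ} (hre : z.re = w.re)
    (hnormSq : normSq z = normSq w) (him : 0 < z.im ↔ 0 < w.im) : z = w := by
  have hsq : z.im ^ 2 = w.im ^ 2 := by
    rw [normSq_apply, normSq_apply, hre] at hnormSq
    linear_combination hnormSq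
  refine Complex.ext hre ?_
  rcases sq_eq_sq_iff_eq_or_eq_neg.mp hsq with h | h
  · exact h
  · rw [h] at him ⊢
    rcases lt_trichotomy w.im 0 with hw | hw | hw
    · linarith [him.mp (by linarith)]
    · rw [hw, neg_zero]
    · linarith [him.mpr hw]

theorem Matrix.IsDiag.commute {n R : Type*} [Fintype n] [DecidableEq n]
    [NonUnitalNonAssocCommSemiring R] {A B : Matrix n n R} (hA : A.IsDiag) (hB : B.IsDiag) :
    Commute A B := by
  rw [← hA.diagonal_diag, ← hB.diagonal_diag]
  exact commute_diagonal _ _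

theorem Matrix.IsDiag.of_commute {n R : Type*} [Fintype n] [DecidableEq n] [CommRing R]
    [NoZeroDivisors R] {A D : Matrix n n R} (hD : D.IsDiag)
    (hdistinct : Pairwise fun i j => D i i ≠ D j j) (h : Commute A D) : A.IsDiag := by
  intro i j hij
  have hij' := congr_fun (congr_fun h.eq i) j
  rw [← hD.diagonal_diag, mul_diagonal, diagonal_mul, diag_apply, diag_apply] at hij'
  have : A i j * (D j j - D i i) = 0 := by linear_combination hij'
  exact (mul_eq_zero.mp this).resolve_right (sub_ne_zero.mpr (hdistinct hij).symm)

theorem Matrix.isClosed_setOf_isDiag {n R : Type*} [TopologicalSpace R] [T1Space R] [Zero R] :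
    IsClosed {A : Matrix n n R | A.IsDiag} := by
  have : {A : Matrix n n R | A.IsDiag} = ⋂ (i) (j) (_ : i ≠ j), {A | A i j ∈ ({0} : Set R)} := by
    ext; simp [Matrix.IsDiag, Pairwise]
  rw [this]
  exact isClosed_iInter fun i => isClosed_iInter fun j => isClosed_iInter fun _ =>
    isClosed_singleton.preimage ((continuous_id (X := Matrix n n R)).matrix_elem i j)

theorem Matrix.isClosed_unitaryGroup {n α : Type*} [Fintype n] [DecidableEq n] [CommRing α]
    [StarRing α] [TopologicalSpace α] [IsTopologicalRing α] [ContinuousStar α] [T2Space α] :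
    IsClosed (unitaryGroup n α : Set (Matrix n n α)) := by
  have : (unitaryGroup n α : Set (Matrix n n α)) = {A | A * star A = 1} :=
    Set.ext fun _ => mem_unitaryGroup_iff
  rw [this]
  exact isClosed_eq (continuous_id.matrix_mul continuous_star) continuous_const

theorem Matrix.isCompact_unitaryGroup {n 𝕜 : Type*} [Fintype n] [DecidableEq n] [RCLike 𝕜] :
    IsCompact (unitaryGroup n 𝕜 : Set (Matrix n n 𝕜)) := by
  have hball : IsCompact (X := Matrix n n 𝕜)
      (Set.univ.pi fun _ => Set.univ.pi fun _ => Metric.closedBall 0 1) :=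
    isCompact_univ_pi fun _ => isCompact_univ_pi fun _ => isCompact_closedBall 0 1
  refine hball.of_isClosed_subset isClosed_unitaryGroup fun A hA i _ j _ => ?_
  simpa using entry_norm_bound_of_unitary hA i j

namespace Matrix.specialUnitaryGroup

variable {n : Type*} [Fintype n] [DecidableEq n]

instance compactSpace {𝕜 : Type*} [RCLike 𝕜] : CompactSpace (specialUnitaryGroup n 𝕜) :=
  isCompact_iff_compactSpace.mp <| isCompact_unitaryGroup.of_isClosed_subset
    (isClosed_unitaryGroup.inter (isClosed_eq continuous_id.matrix_det continuous_const))
    fun _ hA => hA.1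

variable {α : Type*} [CommRing α] [StarRing α]

instance isTopologicalGroup [TopologicalSpace α] [IsTopologicalRing α] [ContinuousStar α] :
    IsTopologicalGroup (specialUnitaryGroup n α) where
  continuous_inv := continuous_subtype_val.matrix_conjTranspose.subtype_mk _

theorem coe_inv (A : specialUnitaryGroup n α) :
    ((A⁻¹ : specialUnitaryGroup n α) : Matrix n n α) = (A : Matrix n n α)⁻¹ :=
  (inv_eq_left_inv (mem_unitaryGroup_iff'.mp A.2.1)).symm

theorem star_eq_adjugate (A : specialUnitaryGroup n α) : star A.1 = adjugate A.1 :=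
  calc star A.1 = star A.1 * (A.1 * adjugate A.1) := by
        rw [mul_adjugate, (mem_specialUnitaryGroup_iff.mp A.2).2, one_smul, Matrix.mul_one]
    _ = adjugate A.1 := by rw [← Matrix.mul_assoc, mem_unitaryGroup_iff'.mp A.2.1, Matrix.one_mul]

end Matrix.specialUnitaryGroup

local notation "SU(2)" => Matrix.specialUnitaryGroup (Fin 2) ℂ

namespace SU2

theorem apply_one_one (A : SU(2)) : A.1 1 1 = conj (A.1 0 0) := by
  simpa [adjugate_fin_two] using
    (congr_fun (congr_fun (specialUnitaryGroup.star_eq_adjugate A) 0) 0).symm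

theorem apply_one_zero (A : SU(2)) : A.1 1 0 = -conj (A.1 0 1) := by
  have h := congr_fun (congr_fun (specialUnitaryGroup.star_eq_adjugate A) 0) 1
  simp only [adjugate_fin_two, star_apply, of_apply, cons_val', cons_val_zero, cons_val_one,
    empty_val', cons_val_fin_one, RCLike.star_def] at h
  simpa using congrArg conj h

theorem mul_conj_add_mul_conj (A : SU(2)) :
    A.1 0 0 * conj (A.1 0 0) + A.1 0 1 * conj (A.1 0 1) = 1 := by
  simpa [Matrix.mul_apply, Fin.sum_univ_two] using
    congr_fun (congr_fun (mem_unitaryGroup_iff.mp A.2.1) 0) 0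

theorem mem_of_mul_conj_add_mul_conj {x y : ℂ} (h : x * conj x + y * conj y = 1) :
    !![x, -conj y; y, conj x] ∈ SU(2) := by
  have hdet : det !![x, -conj y; y, conj x] = 1 := by
    rw [det_fin_two_of]; linear_combination h
  have hstar : star !![x, -conj y; y, conj x] = adjugate !![x, -conj y; y, conj x] := by
    rw [adjugate_fin_two_of]
    ext i j
    fin_cases i <;> fin_cases j <;> simp
  refine mem_specialUnitaryGroup_iff.mpr ⟨mem_unitaryGroup_iff.mpr ?_, hdet⟩
  rw [hstar, mul_adjugate, hdet, one_smul]

theorem isDiag_iff (A : SU(2)) : A.1.IsDiag ↔ A.1 1 0 = 0 := by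
  refine ⟨fun h => h (by decide), fun h i j hij => ?_⟩
  fin_cases i <;> fin_cases j
  · exact absurd rfl hij
  · simpa [h] using congrArg conj (apply_one_zero A)
  · exact h
  · exact absurd rfl hij

def weyl : SU(2) :=
  ⟨!![0, -1; 1, 0], by simpa using mem_of_mul_conj_add_mul_conj (x := 0) (y := 1) (by simp)⟩

theorem coe_weyl_inv_mul_mul_weyl (A : SU(2)) :
    (weyl⁻¹ * A * weyl).1 = !![A.1 1 1, -A.1 1 0; -A.1 0 1, A.1 0 0] := by
  ext i j
  fin_cases i <;> fin_cases j <;>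
    simp [← star_eq_inv, specialUnitaryGroup.coe_star, weyl, Matrix.mul_apply, Fin.sum_univ_two]

theorem exists_unit_eigenvector (V : Matrix (Fin 2) (Fin 2) ℂ) :
    ∃ μ x y : ℂ, x * conj x + y * conj y = 1 ∧ V *ᵥ ![x, y] = μ • ![x, y] := by
  obtain ⟨μ, hμ⟩ := Module.End.exists_eigenvalue (toLin' V)
  obtain ⟨v, hv⟩ := hμ.exists_hasEigenvector
  set s : ℝ := Complex.normSq (v 0) + Complex.normSq (v 1)
  have hs : 0 < s := by
    obtain ⟨i, hi⟩ := Function.ne_iff.mp hv.2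
    fin_cases i
    · exact add_pos_of_pos_of_nonneg (Complex.normSq_pos.mpr hi) (Complex.normSq_nonneg _)
    · exact add_pos_of_nonneg_of_pos (Complex.normSq_nonneg _) (Complex.normSq_pos.mpr hi)
  set c : ℂ := (((√s)⁻¹ : ℝ) : ℂ)
  refine ⟨μ, c * v 0, c * v 1, ?_, ?_⟩
  · have : c * v 0 * conj (c * v 0) + c * v 1 * conj (c * v 1) = ((√s)⁻¹ ^ 2 * s : ℝ) := by
      simp only [c, map_mul, Complex.conj_ofReal, s]
      push_cast
      rw [← Complex.mul_conj, ← Complex.mul_conj]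
      ring
    rw [this, inv_pow, Real.sq_sqrt hs.le, inv_mul_cancel₀ hs.ne', Complex.ofReal_one]
  · have hcv : ![c * v 0, c * v 1] = c • v := by
      ext i; fin_cases i <;> rfl
    rw [hcv, mulVec_smul, ← toLin'_apply, hv.apply_eq_smul, smul_comm]

theorem exists_isDiag_conj (V : SU(2)) : ∃ g t : SU(2), t.1.IsDiag ∧ V = g * t * g⁻¹ := by
  obtain ⟨μ, x, y, hxy, hV⟩ := exists_unit_eigenvector V.1
  let g : SU(2) := ⟨!![x, -conj y; y, conj x], mem_of_mul_conj_add_mul_conj hxy⟩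
  refine ⟨g, g⁻¹ * V * g, (isDiag_iff _).mpr ?_, by group⟩
  -- The first column of `g` is an eigenvector of `V`, so `g⁻¹ V g` sends `e₀` to `μ e₀`.
  have h0 : V.1 0 0 * x + V.1 0 1 * y = μ * x := by
    simpa [mulVec, dotProduct, Fin.sum_univ_two] using congr_fun hV 0
  have h1 : V.1 1 0 * x + V.1 1 1 * y = μ * y := by
    simpa [mulVec, dotProduct, Fin.sum_univ_two] using congr_fun hV 1
  simp only [← star_eq_inv, Submonoid.coe_mul, specialUnitaryGroup.coe_star, Matrix.mul_apply,
    star_apply, of_apply, cons_val', cons_val_one, cons_val_zero, cons_val_fin_one,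
    RCLike.star_def, Fin.sum_univ_two, map_neg, Complex.conj_conj, neg_mul, g]
  linear_combination (-y) * h0 + x * h1

def regular : Set SU(2) := {V | V.1 ≠ 1 ∧ V.1 ≠ -1}

theorem isOpen_regular : IsOpen regular := by
  have : regular = Subtype.val ⁻¹' ({1, -1} : Set (Matrix (Fin 2) (Fin 2) ℂ))ᶜ := by
    ext V; simp [regular, not_or]
  rw [this]
  exact (Set.toFinite _).isClosed.isOpen_compl.preimage continuous_subtype_val

end SU2

namespace diagTorus2

instance : CompactSpace diagTorus2 :=
  isCompact_iff_compactSpace.mp (isClosed_setOf_isDiag.preimage continuous_subtype_val).isCompact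

instance : T2Space diagTorus2 :=
  inferInstanceAs (T2Space {h : SU(2) // (h : Matrix (Fin 2) (Fin 2) ℂ).IsDiag})

theorem coe_eq (h : diagTorus2) : h.1.1 = !![h.1.1 0 0, 0; 0, conj (h.1.1 0 0)] := by
  have h01 : h.1.1 0 1 = 0 := h.2 (by decide)
  have h10 : h.1.1 1 0 = 0 := h.2 (by decide)
  ext i j
  fin_cases i <;> fin_cases j <;> simp [h01, h10, SU2.apply_one_one]

theorem ext_apply_zero_zero {h h' : diagTorus2} (e : h.1.1 0 0 = h'.1.1 0 0) : h = h' :=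
  Subtype.ext <| Subtype.ext <| by rw [coe_eq h, coe_eq h', e]

theorem mul_conj_apply_zero_zero (h : diagTorus2) : h.1.1 0 0 * conj (h.1.1 0 0) = 1 := by
  simpa [h.2 (show (0 : Fin 2) ≠ 1 by decide)] using SU2.mul_conj_add_mul_conj h.1

theorem trace_eq (h : diagTorus2) : trace h.1.1 = 2 * (h.1.1 0 0).re := by
  rw [trace_fin_two, SU2.apply_one_one, Complex.add_conj, Complex.ofReal_mul, Complex.ofReal_ofNat]

theorem coe_eq_one_or_neg_one (h : diagTorus2) (him : (h.1.1 0 0).im = 0) :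
    h.1.1 = 1 ∨ h.1.1 = -1 := by
  have hre : h.1.1 0 0 = ((h.1.1 0 0).re : ℂ) := Complex.ext rfl (by simp [him])
  have hsq : (h.1.1 0 0).re ^ 2 = 1 := by
    have := h.mul_conj_apply_zero_zero
    rw [hre, Complex.conj_ofReal, ← Complex.ofReal_mul] at this
    rw [sq]
    exact_mod_cast this
  rw [coe_eq h, hre, Complex.conj_ofReal]
  rcases sq_eq_one_iff.mp hsq with h1 | h1 <;> rw [h1]
  · exact Or.inl (by simp [one_fin_two])
  · exact Or.inr (by ext i j; fin_cases i <;> fin_cases j <;> simp)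

def weylConj (h : diagTorus2) : diagTorus2 :=
  ⟨SU2.weyl⁻¹ * h.1 * SU2.weyl, (SU2.isDiag_iff _).mpr <| by
    rw [SU2.coe_weyl_inv_mul_mul_weyl]; simpa using h.2 (show (0 : Fin 2) ≠ 1 by decide)⟩

theorem weylConj_apply_zero_zero (h : diagTorus2) :
    (weylConj h).1.1 0 0 = conj (h.1.1 0 0) := by
  show (SU2.weyl⁻¹ * h.1 * SU2.weyl).1 0 0 = _
  rw [SU2.coe_weyl_inv_mul_mul_weyl]
  simp [SU2.apply_one_one]

end diagTorus2

theorem mul_mul_inv_eq_of_diagCosetRel2 (h : diagTorus2) {g g' : SU(2)}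
    (hg : diagCosetRel2 g g') : g * h.1 * g⁻¹ = g' * h.1 * g'⁻¹ := by
  obtain ⟨k, hk, rfl⟩ := hg
  have hcomm : Commute k h.1 := Subtype.ext (hk.commute h.2).eq
  calc g * h.1 * g⁻¹ = g * (k * h.1 * k⁻¹) * g⁻¹ := by rw [hcomm.mul_inv_cancel]
    _ = g * k * h.1 * (g * k)⁻¹ := by group

def conjTorus (z : Quot diagCosetRel2 × diagTorus2) : SU(2) :=
  Quot.lift (fun g => g * z.2.1 * g⁻¹) (fun _ _ => mul_mul_inv_eq_of_diagCosetRel2 z.2) z.1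

theorem conjTorus_mk (g : SU(2)) (h : diagTorus2) :
    conjTorus (Quot.mk _ g, h) = g * h.1 * g⁻¹ := rfl

theorem continuous_conjTorus : Continuous conjTorus :=
  isQuotientMap_quot_mk.continuous_lift_prod_left
    (by fun_prop : Continuous fun p : SU(2) × diagTorus2 => p.1 * p.2.1 * p.1⁻¹)

theorem trace_conjTorus (z : Quot diagCosetRel2 × diagTorus2) :
    trace (conjTorus z).1 = trace z.2.1.1 := by
  obtain ⟨q, h⟩ := z
  induction q using Quot.ind with | mk g => ?_
  rw [conjTorus_mk, Submonoid.coe_mul, Submonoid.coe_mul, trace_mul_cycle, ← Submonoid.coe_mul,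
    inv_mul_cancel, OneMemClass.coe_one, Matrix.one_mul]

noncomputable def sheet (z : Quot diagCosetRel2 × diagTorus2) : Bool :=
  decide (0 < (z.2.1.1 0 0).im)

theorem continuousAt_sheet {z : Quot diagCosetRel2 × diagTorus2} (hz : (z.2.1.1 0 0).im ≠ 0) :
    ContinuousAt sheet z :=
  continuousAt_decide_pos (Complex.continuous_im.comp
    ((continuous_subtype_val.comp (continuous_subtype_val.comp continuous_snd)).matrix_elem 0 0)
    ).continuousAt hz

theorem im_ne_zero_of_conjTorus_mem_regular {z : Quot diagCosetRel2 × diagTorus2}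
    (hz : conjTorus z ∈ SU2.regular) : (z.2.1.1 0 0).im ≠ 0 := by
  obtain ⟨q, h⟩ := z
  induction q using Quot.ind with | mk g => ?_
  intro him
  have hpm := h.coe_eq_one_or_neg_one him
  have hfixed : (conjTorus (Quot.mk _ g, h)).1 = h.1.1 := by
    have hcomm : Commute g h.1 := Subtype.ext (by rcases hpm with h1 | h1 <;> simp [h1])
    rw [conjTorus_mk, hcomm.mul_inv_cancel]
  rcases hpm with h1 | h1
  exacts [hz.1 (hfixed.trans h1), hz.2 (hfixed.trans h1)]

theorem eq_of_conjTorus_eq {z w : Quot diagCosetRel2 × diagTorus2}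
    (hz : conjTorus z ∈ SU2.regular) (hzw : conjTorus z = conjTorus w)
    (hsheet : sheet z = sheet w) : z = w := by
  have him := im_ne_zero_of_conjTorus_mem_regular hz
  obtain ⟨q₁, h₁⟩ := z
  obtain ⟨q₂, h₂⟩ := w
  induction q₁ using Quot.ind with | mk g₁ => ?_
  induction q₂ using Quot.ind with | mk g₂ => ?_
  -- `tr V = 2 Re μ` and `|μ| = 1`, so `μ` is fixed by `V` up to the sign of `Im μ`.
  have hh : h₁ = h₂ := by
    refine diagTorus2.ext_apply_zero_zero (Complex.eq_of_re_eq_of_normSq_eq ?_ ?_ ?_)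
    · have htrace := congrArg (fun V : SU(2) => trace V.1) hzw
      simp only [trace_conjTorus, diagTorus2.trace_eq] at htrace
      exact_mod_cast mul_left_cancel₀ two_ne_zero htrace
    · have h₁1 := h₁.mul_conj_apply_zero_zero
      have h₂1 := h₂.mul_conj_apply_zero_zero
      rw [Complex.mul_conj] at h₁1 h₂1
      exact_mod_cast h₁1.trans h₂1.symm
    · simpa [sheet] using hsheet
  subst hh
  have hcomm : Commute (g₁⁻¹ * g₂) h₁.1 :=
    calc g₁⁻¹ * g₂ * h₁.1 = g₁⁻¹ * (g₂ * h₁.1 * g₂⁻¹) * g₂ := by group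
      _ = g₁⁻¹ * (g₁ * h₁.1 * g₁⁻¹) * g₂ := by rw [← conjTorus_mk, ← conjTorus_mk, hzw]
      _ = h₁.1 * (g₁⁻¹ * g₂) := by group
  have hdistinct : Pairwise fun i j => h₁.1.1 i i ≠ h₁.1.1 j j := by
    have hne : h₁.1.1 0 0 ≠ h₁.1.1 1 1 := by
      rw [SU2.apply_one_one]
      exact fun e => him (Complex.conj_eq_iff_im.mp e.symm)
    intro i j hij
    fin_cases i <;> fin_cases j
    exacts [absurd rfl hij, hne, hne.symm, absurd rfl hij]
  have hdiag : (g₁⁻¹ * g₂).1.IsDiag :=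
    IsDiag.of_commute h₁.2 hdistinct (congrArg Subtype.val hcomm)
  exact Prod.ext (Quot.sound ⟨g₁⁻¹ * g₂, hdiag, by group⟩) rfl

theorem exists_conjTorus_eq_and_sheet_eq {V : SU(2)} (hV : V ∈ SU2.regular) (b : Bool) :
    ∃ z, conjTorus z = V ∧ sheet z = b := by
  obtain ⟨g, t, ht, rfl⟩ := SU2.exists_isDiag_conj V
  let h : diagTorus2 := ⟨t, ht⟩
  have him := im_ne_zero_of_conjTorus_mem_regular (z := (Quot.mk _ g, h)) hV
  by_cases hb : sheet (Quot.mk _ g, h) = b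
  · exact ⟨_, rfl, hb⟩
  refine ⟨(Quot.mk _ (g * SU2.weyl), h.weylConj), ?_, ?_⟩
  · rw [conjTorus_mk]
    show g * SU2.weyl * (SU2.weyl⁻¹ * t * SU2.weyl) * (g * SU2.weyl)⁻¹ = g * t * g⁻¹
    group
  · simp only [sheet, diagTorus2.weylConj_apply_zero_zero, Complex.conj_im] at hb ⊢
    cases b <;> simp only [decide_eq_false_iff_not, decide_eq_true_eq, not_lt, Left.neg_pos_iff] at hb ⊢
    · linarith
    · exact lt_of_le_of_ne hb him

/-- The map `SU(2) × T → SU(2)`, `(g, h) ↦ g h g⁻¹`, descends to a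
well-defined continuous map `p : (SU(2)/T) × T → SU(2)`, and the restriction of `p` over
`SU(2) \ {1, −1}` is a double covering: a covering map onto `SU(2) \ {1, −1}` each of whose
fibers has exactly two elements. -/
theorem su2_adjoint_double_covering :
    ∃ p : Quot diagCosetRel2 × diagTorus2 → Matrix.specialUnitaryGroup (Fin 2) ℂ,
      Continuous p ∧
      (∀ (g : Matrix.specialUnitaryGroup (Fin 2) ℂ) (h : diagTorus2),
        (p (Quot.mk diagCosetRel2 g, h) : Matrix (Fin 2) (Fin 2) ℂ) =
          (g : Matrix (Fin 2) (Fin 2) ℂ) * (h.1 : Matrix (Fin 2) (Fin 2) ℂ) *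
            (g : Matrix (Fin 2) (Fin 2) ℂ)⁻¹) ∧
      IsCoveringMapOn p {V : Matrix.specialUnitaryGroup (Fin 2) ℂ |
        (V : Matrix (Fin 2) (Fin 2) ℂ) ≠ 1 ∧ (V : Matrix (Fin 2) (Fin 2) ℂ) ≠ -1} ∧
      (∀ V : Matrix.specialUnitaryGroup (Fin 2) ℂ,
        (V : Matrix (Fin 2) (Fin 2) ℂ) ≠ 1 → (V : Matrix (Fin 2) (Fin 2) ℂ) ≠ -1 →
          (p ⁻¹' {V}).ncard = 2) := by
  have hcover (V : SU(2)) (hV : V ∈ SU2.regular) : IsEvenlyCovered conjTorus V Bool :=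
    continuous_conjTorus.isClosedMap.isEvenlyCovered_of_sheet continuous_conjTorus
      SU2.isOpen_regular sheet
      (fun z hz => (continuousAt_sheet (im_ne_zero_of_conjTorus_mem_regular hz)).continuousWithinAt)
      (fun _ hz _ => eq_of_conjTorus_eq hz) (fun _ hV => exists_conjTorus_eq_and_sheet_eq hV) hV
  refine ⟨conjTorus, continuous_conjTorus, fun g h => ?_,
    fun V hV => (hcover V hV).to_isEvenlyCovered_preimage, fun V h1 h2 => ?_⟩
  · rw [conjTorus_mk, Submonoid.coe_mul, Submonoid.coe_mul, specialUnitaryGroup.coe_inv]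
  · rw [← Nat.card_coe_set_eq, ← Nat.card_congr (hcover V ⟨h1, h2⟩).fiberHomeomorph.toEquiv]
    simp
end
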